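/- arXiv:2305.15572 — 2 statements merged into one kernel-verified Lean document; each statement's English description precedes it below -/
import Mathlib

section
/- Let K ⊆ ℝ^d be a nonempty convex set and let P : ℝ^d → ℝ^d satisfy: P(z) ∈ K and ‖P(z) − z‖ ≤ ‖y − z‖ for all z ∈ ℝ^d and all y ∈ K. Let f : ℝ^d → ℝ be differentiable, L-smooth (L > 0), with f(x) ≥ f* for all x ∈ K and ‖∇f(x)‖ ≤ L′ for all x ∈ K. Let T ≥ 1 and let (x_t), (ĝ_t), (η_t), (ξ_t) satisfy: x_1 ∈ K, 0 < η_t ≤ 1/L, ξ_t ≥ 0, ‖ĝ_t − ∇f(x_t)‖² ≤ ξ_t, and x_{t+1} = P(x_t − η_t ĝ_t) for all t. Define the gradient mapping G(x_t) = (x_t − P(x_t − η_t ∇f(x_t)))/η_t. Then min_{1 ≤ t ≤ T} ‖G(x_t)‖² ≤ ( 2·(f(x_1) − f*) + ∑_{t=1}^{T} η_t ξ_t + 2 L′ ∑_{t=1}^{T} η_t √(ξ_t) ) / ( ∑_{t=1}^{T} η_t ). -/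
/-! The projection onto the convex set `K` satisfies the variational inequality, so it is
1-Lipschitz and the gradient mapping `G` at `x ∈ K` satisfies `‖G‖² ≤ ⟪∇f x, G⟫`. Together with
the descent lemma for the `L`-smooth `f`, the exact step `w = P (x - η ∇f x)` decreases `f` by
`η/2 ‖G‖²`. The biased step lands within `η √ξ` of `w`, which by the descent lemma at `w` and
`‖∇f w‖ ≤ L'` costs at most `L' η √ξ + η ξ / 2`. Summing over `t` telescopes `f`, and the minimum
of `‖G‖²` is at most its `η`-weighted average. -/

open InnerProductSpace Finset

theorem Finset.inf'_mul_sum_le_sum_mul {ι R : Type*} [CommSemiring R] [LinearOrder R]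
    [IsOrderedRing R] {s : Finset ι} (hs : s.Nonempty) (a w : ι → R)
    (hw : ∀ i ∈ s, 0 ≤ w i) : s.inf' hs a * ∑ i ∈ s, w i ≤ ∑ i ∈ s, w i * a i := by
  rw [mul_sum]
  exact sum_le_sum fun i hi => by
    rw [mul_comm]
    exact mul_le_mul_of_nonneg_left (inf'_le a hi) (hw i hi)

variable {F : Type*} [NormedAddCommGroup F] [InnerProductSpace ℝ F]

section Smooth

variable [CompleteSpace F] {f : F → ℝ}

theorem hasDerivAt_comp_add_smul (hf : Differentiable ℝ f) (x v : F) (t : ℝ) :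
    HasDerivAt (fun s : ℝ => f (x + s • v)) ⟪gradient f (x + t • v), v⟫_ℝ t := by
  have hline : HasDerivAt (fun s : ℝ => x + s • v) v t := by
    simpa using ((hasDerivAt_id t).smul_const v).const_add x
  rw [inner_gradient_left]
  exact (hf (x + t • v)).hasFDerivAt.comp_hasDerivAt t hline

theorem le_add_inner_gradient_add_sq {L : ℝ} (hf : Differentiable ℝ f)
    (hL : ∀ x y, ‖gradient f x - gradient f y‖ ≤ L * ‖x - y‖) (x y : F) :
    f y ≤ f x + ⟪gradient f x, y - x⟫_ℝ + L / 2 * ‖y - x‖ ^ 2 := by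
  set v := y - x
  set c := ⟪gradient f x, v⟫_ℝ
  -- `s ↦ f (x + s • v)` stays below the parabola through `(0, f x)` whose slope dominates its own
  have hparabola (t : ℝ) := (((hasDerivAt_id t).mul_const c).const_add (f x)).add
    ((hasDerivAt_pow 2 t).const_mul (L / 2 * ‖v‖ ^ 2))
  have hslope : ∀ t ∈ Set.Ico (0 : ℝ) 1,
      ⟪gradient f (x + t • v), v⟫_ℝ ≤ c + L * ‖v‖ ^ 2 * t := fun t ht => by
    have hdiff : ⟪gradient f (x + t • v) - gradient f x, v⟫_ℝ ≤ L * ‖v‖ ^ 2 * t :=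
      calc _ ≤ ‖gradient f (x + t • v) - gradient f x‖ * ‖v‖ := real_inner_le_norm _ _
        _ ≤ L * ‖(x + t • v) - x‖ * ‖v‖ := by gcongr; exact hL _ _
        _ = L * ‖v‖ ^ 2 * t := by
          rw [add_sub_cancel_left, norm_smul, Real.norm_of_nonneg ht.1]; ring
    rw [inner_sub_left] at hdiff
    linarith
  have hcompare := image_le_of_deriv_right_le_deriv_boundary
    (fun t _ => (hasDerivAt_comp_add_smul hf x v t).continuousAt.continuousWithinAt)
    (fun t _ => (hasDerivAt_comp_add_smul hf x v t).hasDerivWithinAt)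
    (by simp) (fun t _ => (hparabola t).continuousAt.continuousWithinAt)
    (fun t _ => (hparabola t).hasDerivWithinAt) (fun t ht => (hslope t ht).trans_eq (by norm_num; ring))
    (Set.right_mem_Icc.2 zero_le_one)
  simpa [v] using hcompare

theorem le_add_mul_norm_add_sq {L L' : ℝ} (hf : Differentiable ℝ f)
    (hL : ∀ x y, ‖gradient f x - gradient f y‖ ≤ L * ‖x - y‖) {w : F}
    (hw : ‖gradient f w‖ ≤ L') (y : F) :
    f y ≤ f w + L' * ‖y - w‖ + L / 2 * ‖y - w‖ ^ 2 := by
  have hinner : ⟪gradient f w, y - w⟫_ℝ ≤ L' * ‖y - w‖ :=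
    (real_inner_le_norm _ _).trans (by gcongr)
  linarith [le_add_inner_gradient_add_sq hf hL w y]

end Smooth

def IsMetricProjection (K : Set F) (P : F → F) : Prop :=
  ∀ z, P z ∈ K ∧ ∀ y ∈ K, ‖P z - z‖ ≤ ‖y - z‖

noncomputable def gradientMapping (P : F → F) (η : ℝ) (v x : F) : F :=
  η⁻¹ • (x - P (x - η • v))

theorem smul_gradientMapping {P : F → F} {η : ℝ} (hη : η ≠ 0) (v x : F) :
    η • gradientMapping P η v x = x - P (x - η • v) := by
  rw [gradientMapping, smul_inv_smul₀ hη]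

namespace IsMetricProjection

variable {K : Set F} {P : F → F}

theorem inner_sub_le_zero (hP : IsMetricProjection K P) (hK : Convex ℝ K) (z : F) {y : F}
    (hy : y ∈ K) : ⟪z - P z, y - P z⟫_ℝ ≤ 0 := by
  have hleast : IsLeast (Set.range fun w : K => ‖z - w‖) ‖z - P z‖ :=
    ⟨⟨⟨P z, (hP z).1⟩, rfl⟩, Set.forall_mem_range.2 fun w => by
      simpa only [norm_sub_rev z] using (hP z).2 w w.2⟩
  have : Nonempty K := ⟨⟨P z, (hP z).1⟩⟩
  exact (norm_eq_iInf_iff_real_inner_le_zero hK (hP z).1).1 hleast.isGLB.ciInf_eq.symm y hy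

theorem norm_sub_le (hP : IsMetricProjection K P) (hK : Convex ℝ K) (u v : F) :
    ‖P u - P v‖ ≤ ‖u - v‖ := by
  have hu := hP.inner_sub_le_zero hK u (hP v).1
  have hv := hP.inner_sub_le_zero hK v (hP u).1
  have hsq : ‖P u - P v‖ ^ 2 ≤ ‖u - v‖ * ‖P u - P v‖ :=
    calc ‖P u - P v‖ ^ 2 = ⟪P u - P v, P u - P v⟫_ℝ := (real_inner_self_eq_norm_sq _).symm
      _ ≤ ⟪u - v, P u - P v⟫_ℝ := by
        simp only [inner_sub_left, inner_sub_right, real_inner_comm] at hu hv ⊢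
        linarith
      _ ≤ ‖u - v‖ * ‖P u - P v‖ := real_inner_le_norm _ _
  rcases (norm_nonneg (P u - P v)).eq_or_lt with h | h
  · exact h ▸ norm_nonneg _
  · exact le_of_mul_le_mul_right (by rwa [← sq]) h

theorem norm_sq_gradientMapping_le_inner (hP : IsMetricProjection K P) (hK : Convex ℝ K)
    {η : ℝ} (hη : 0 < η) (v : F) {x : F} (hx : x ∈ K) :
    ‖gradientMapping P η v x‖ ^ 2 ≤ ⟪v, gradientMapping P η v x⟫_ℝ := by
  set G := gradientMapping P η v x
  have hvar := hP.inner_sub_le_zero hK (x - η • v) hx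
  rw [sub_right_comm, ← smul_gradientMapping hη.ne', ← smul_sub, real_inner_smul_left,
    real_inner_smul_right, inner_sub_left, real_inner_self_eq_norm_sq] at hvar
  nlinarith [mul_pos hη hη]

variable [CompleteSpace F] {f : F → ℝ} {L η : ℝ}

theorem le_sub_mul_norm_sq_gradientMapping (hP : IsMetricProjection K P) (hK : Convex ℝ K)
    (hf : Differentiable ℝ f) (hL : ∀ x y, ‖gradient f x - gradient f y‖ ≤ L * ‖x - y‖)
    (hη : 0 < η) (hLη : L * η ≤ 1) {x : F} (hx : x ∈ K) :
    f (P (x - η • gradient f x)) ≤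
      f x - η / 2 * ‖gradientMapping P η (gradient f x) x‖ ^ 2 := by
  set G := gradientMapping P η (gradient f x) x
  have hstep : P (x - η • gradient f x) - x = -(η • G) := by
    rw [smul_gradientMapping hη.ne', neg_sub]
  have hdesc := le_add_inner_gradient_add_sq hf hL x (P (x - η • gradient f x))
  rw [hstep, inner_neg_right, real_inner_smul_right, norm_neg, norm_smul,
    Real.norm_of_nonneg hη.le] at hdesc
  have hG := hP.norm_sq_gradientMapping_le_inner hK hη (gradient f x) hx
  nlinarith [mul_le_mul_of_nonneg_left hG hη.le, sq_nonneg ‖G‖]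

theorem mul_norm_sq_gradientMapping_le (hP : IsMetricProjection K P) (hK : Convex ℝ K)
    (hf : Differentiable ℝ f) (hL : ∀ x y, ‖gradient f x - gradient f y‖ ≤ L * ‖x - y‖)
    {L' : ℝ} (hL' : ∀ y ∈ K, ‖gradient f y‖ ≤ L') (hη : 0 < η) (hηL : η ≤ 1 / L)
    {x g : F} {ξ : ℝ} (hx : x ∈ K) (hg : ‖g - gradient f x‖ ^ 2 ≤ ξ) :
    η * ‖gradientMapping P η (gradient f x) x‖ ^ 2 ≤
      2 * (f x - f (P (x - η • g))) + η * ξ + 2 * L' * (η * √ξ) := by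
  have hLpos : 0 < L := one_div_pos.1 (hη.trans_le hηL)
  have hLη : L * η ≤ 1 := by rwa [le_div_iff₀ hLpos, mul_comm] at hηL
  set w := P (x - η • gradient f x)
  set d := ‖P (x - η • g) - w‖
  have hd : d ≤ η * √ξ :=
    calc d ≤ ‖(x - η • g) - (x - η • gradient f x)‖ := hP.norm_sub_le hK _ _
      _ = η * ‖g - gradient f x‖ := by
        rw [sub_sub_sub_cancel_left, ← smul_sub, norm_smul, Real.norm_of_nonneg hη.le,
          norm_sub_rev]
      _ ≤ η * √ξ := by gcongr; simpa using Real.abs_le_sqrt hg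
  have hL'w := hL' w (hP _).1
  have hξ : 0 ≤ ξ := (sq_nonneg _).trans hg
  have hquad : L / 2 * d ^ 2 ≤ η / 2 * ξ :=
    calc L / 2 * d ^ 2 ≤ L / 2 * (η * √ξ) ^ 2 := by gcongr
      _ = L * η * (η / 2 * ξ) := by rw [mul_pow, Real.sq_sqrt hξ]; ring
      _ ≤ η / 2 * ξ := mul_le_of_le_one_left (by positivity) hLη
  have hdesc := le_add_mul_norm_add_sq hf hL hL'w (P (x - η • g))
  have hlin : L' * d ≤ L' * (η * √ξ) := by
    gcongr; exact (norm_nonneg _).trans hL'w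
  linarith [hP.le_sub_mul_norm_sq_gradientMapping hK hf hL hη hLη hx]

end IsMetricProjection

theorem biased_projected_gd_min_grad_mapping_le_general {d : ℕ}
    (K : Set (EuclideanSpace ℝ (Fin d))) (hK : Convex ℝ K)
    (P : EuclideanSpace ℝ (Fin d) → EuclideanSpace ℝ (Fin d))
    (hPmem : ∀ z, P z ∈ K)
    (hPproj : ∀ z, ∀ y ∈ K, ‖P z - z‖ ≤ ‖y - z‖)
    (f : EuclideanSpace ℝ (Fin d) → ℝ) (L : ℝ)
    (hdiff : Differentiable ℝ f)
    (hsmooth : ∀ x y, ‖gradient f x - gradient f y‖ ≤ L * ‖x - y‖)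
    (fstar : ℝ) (hfstar : ∀ x ∈ K, fstar ≤ f x)
    (L' : ℝ) (hL' : ∀ x ∈ K, ‖gradient f x‖ ≤ L')
    (T : ℕ) (hT : 1 ≤ T)
    (x g : ℕ → EuclideanSpace ℝ (Fin d)) (η ξ : ℕ → ℝ)
    (hx1 : x 1 ∈ K)
    (hη : ∀ t, 1 ≤ t → 0 < η t ∧ η t ≤ 1 / L)
    (hbias : ∀ t, 1 ≤ t → ‖g t - gradient f (x t)‖ ^ 2 ≤ ξ t)
    (hupdate : ∀ t, 1 ≤ t → x (t + 1) = P (x t - η t • g t))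
    (G : ℕ → EuclideanSpace ℝ (Fin d))
    (hG : ∀ t, G t = (η t)⁻¹ • (x t - P (x t - η t • gradient f (x t)))) :
    (Finset.Icc 1 T).inf' (Finset.nonempty_Icc.mpr hT) (fun t => ‖G t‖ ^ 2) ≤
      (2 * (f (x 1) - fstar) + ∑ t ∈ Finset.Icc 1 T, η t * ξ t
        + 2 * L' * ∑ t ∈ Finset.Icc 1 T, η t * Real.sqrt (ξ t)) /
        (∑ t ∈ Finset.Icc 1 T, η t) := by
  have hP : IsMetricProjection K P := fun z => ⟨hPmem z, hPproj z⟩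
  have hxK : ∀ t, 1 ≤ t → x t ∈ K := Nat.le_induction hx1 fun t ht _ => hupdate t ht ▸ hPmem _
  have hstep : ∀ t ∈ Icc 1 T, η t * ‖G t‖ ^ 2 ≤
      2 * (f (x t) - f (x (t + 1))) + η t * ξ t + 2 * L' * (η t * √(ξ t)) := fun t ht => by
    have ht : 1 ≤ t := (mem_Icc.1 ht).1
    rw [hG, hupdate t ht]
    exact hP.mul_norm_sq_gradientMapping_le hK hdiff hsmooth hL' (hη t ht).1 (hη t ht).2
      (hxK t ht) (hbias t ht)
  have hsum := sum_le_sum hstep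
  simp only [sum_add_distrib, ← mul_sum, sum_sub_distrib] at hsum
  have htel := sum_Icc_sub hT (fun t => f (x t))
  rw [sum_sub_distrib] at htel
  have hlast := hfstar _ (hxK (T + 1) (by omega))
  rw [le_div_iff₀ (sum_pos (fun t ht => (hη t (mem_Icc.1 ht).1).1) (nonempty_Icc.2 hT))]
  calc _ ≤ ∑ t ∈ Icc 1 T, η t * ‖G t‖ ^ 2 :=
        inf'_mul_sum_le_sum_mul _ _ _ fun t ht => (hη t (mem_Icc.1 ht).1).1.le
    _ ≤ _ := by linarith

/-- Convergence of projected gradient descent with biased gradient oracles: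
the minimum squared norm of the gradient mapping over the first `T` iterations is bounded
via the cumulative bias. -/
theorem biased_projected_gd_min_grad_mapping_le {d : ℕ}
    (K : Set (EuclideanSpace ℝ (Fin d))) (hKne : K.Nonempty) (hK : Convex ℝ K)
    (P : EuclideanSpace ℝ (Fin d) → EuclideanSpace ℝ (Fin d))
    (hPmem : ∀ z, P z ∈ K)
    (hPproj : ∀ z, ∀ y ∈ K, ‖P z - z‖ ≤ ‖y - z‖)
    (f : EuclideanSpace ℝ (Fin d) → ℝ) (L : ℝ) (hL : 0 < L)
    (hdiff : Differentiable ℝ f)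
    (hsmooth : ∀ x y, ‖gradient f x - gradient f y‖ ≤ L * ‖x - y‖)
    (fstar : ℝ) (hfstar : ∀ x ∈ K, fstar ≤ f x)
    (L' : ℝ) (hL' : ∀ x ∈ K, ‖gradient f x‖ ≤ L')
    (T : ℕ) (hT : 1 ≤ T)
    (x g : ℕ → EuclideanSpace ℝ (Fin d)) (η ξ : ℕ → ℝ)
    (hx1 : x 1 ∈ K)
    (hη : ∀ t, 1 ≤ t → 0 < η t ∧ η t ≤ 1 / L)
    (hξ : ∀ t, 1 ≤ t → 0 ≤ ξ t)
    (hbias : ∀ t, 1 ≤ t → ‖g t - gradient f (x t)‖ ^ 2 ≤ ξ t)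
    (hupdate : ∀ t, 1 ≤ t → x (t + 1) = P (x t - η t • g t))
    (G : ℕ → EuclideanSpace ℝ (Fin d))
    (hG : ∀ t, G t = (η t)⁻¹ • (x t - P (x t - η t • gradient f (x t)))) :
    (Finset.Icc 1 T).inf' (Finset.nonempty_Icc.mpr hT) (fun t => ‖G t‖ ^ 2) ≤
      (2 * (f (x 1) - fstar) + ∑ t ∈ Finset.Icc 1 T, η t * ξ t
        + 2 * L' * ∑ t ∈ Finset.Icc 1 T, η t * Real.sqrt (ξ t)) /
        (∑ t ∈ Finset.Icc 1 T, η t) :=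
  biased_projected_gd_min_grad_mapping_le_general K hK P hPmem hPproj f L hdiff hsmooth fstar hfstar
    L' hL' T hT x g η ξ hx1 hη hbias hupdate G hG
end

section
/- Fix integers d ≥ 1 and b with 2 ≤ b ≤ d + 1, and consider the RBF kernel k(x, x′) = exp(−½‖x − x′‖²) on ℝ^d. Then for every ε > 0 there exist points Z : Fin b → ℝ^d such that, writing K for the b×b matrix with entries K_{jl} = k(Z_j, Z_l), and G for the d×b matrix with entries G_{ij} = (Z_j)_i · exp(−½‖Z_j‖²), the matrix K is invertible and d − trace( G · K⁻¹ · Gᵀ ) ≤ (1 + d − b) + ε. -/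
/-!
Take `Z₀ = 0` and `Zⱼ = t eⱼ` for `j = 1, …, b - 1`, and put `a = exp (-t² / 2)`. Then
`K = D + w wᵀ` with `D = diag (0, 1 - a², …, 1 - a²)` and `w = (1, a, …, a)`, which is positive
definite; and `GᵀG = diag (0, t²a², …, t²a²)`, because the columns of `G` are orthogonal and the
one at the origin vanishes. The vector `y = (1 - a²)⁻¹ (eⱼ - a e₀)` has `D y = eⱼ` and
`w ⬝ y = 0`, so `K y = eⱼ`, hence `(K⁻¹)ⱼⱼ = (1 - a²)⁻¹` and, with `u = t²`,
`trace (G K⁻¹ Gᵀ) = trace (K⁻¹ GᵀG) = (b - 1) u e⁻ᵘ / (1 - e⁻ᵘ) ≥ (b - 1) (1 - u)`.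
Take `u = ε / b`.
-/

open Matrix Real

namespace Matrix

variable {n : Type*} [Fintype n] [DecidableEq n]

theorem dotProduct_diagonal_add_vecMulVec_self_mulVec (d w x : n → ℝ) :
    x ⬝ᵥ ((diagonal d + vecMulVec w w) *ᵥ x) = ∑ i, d i * x i ^ 2 + (w ⬝ᵥ x) ^ 2 := by
  simp only [add_mulVec, dotProduct_add, vecMulVec_mulVec, op_smul_eq_smul, dotProduct_smul,
    smul_eq_mul, dotProduct_comm x w, sq]
  congr 1
  exact Finset.sum_congr rfl fun i _ => by rw [mulVec_diagonal]; ring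

theorem posDef_diagonal_add_vecMulVec_self {d w : n → ℝ} {i₀ : n} (hd₀ : 0 ≤ d i₀)
    (hd : ∀ i, i ≠ i₀ → 0 < d i) (hw : w i₀ ≠ 0) : (diagonal d + vecMulVec w w).PosDef := by
  refine .of_dotProduct_mulVec_pos (by simp [IsHermitian]) fun x hx_ne => ?_
  rw [star_trivial, dotProduct_diagonal_add_vecMulVec_self_mulVec]
  have hterm_nonneg : ∀ i, 0 ≤ d i * x i ^ 2 := fun i => by
    rcases eq_or_ne i i₀ with rfl | hi
    · positivity
    · exact mul_nonneg (hd i hi).le (sq_nonneg _)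
  by_cases h : ∃ i ≠ i₀, x i ≠ 0
  · obtain ⟨i, hi, hxi⟩ := h
    have : 0 < d i * x i ^ 2 := by have := hd i hi; positivity
    have := Finset.single_le_sum (fun j _ => hterm_nonneg j) (Finset.mem_univ i)
    nlinarith [sq_nonneg (w ⬝ᵥ x)]
  · push Not at h
    have hx : x = Pi.single i₀ (x i₀) := by
      ext i
      rcases eq_or_ne i i₀ with rfl | hi
      · simp
      · simp [h i hi, hi]
    have hx₀ : x i₀ ≠ 0 := fun h0 => hx_ne (by rw [hx, h0, Pi.single_zero])
    have : w ⬝ᵥ x ≠ 0 := by rw [hx, dotProduct_single]; exact mul_ne_zero hw hx₀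
    have := Finset.sum_nonneg fun i (_ : i ∈ Finset.univ) => hterm_nonneg i
    positivity

end Matrix

noncomputable section

def cornerKernelMatrix (m : ℕ) (a : ℝ) : Matrix (Fin (m + 1)) (Fin (m + 1)) ℝ :=
  diagonal (Fin.cons 0 fun _ => 1 - a ^ 2) +
    vecMulVec (Fin.cons 1 fun _ => a) (Fin.cons 1 fun _ => a)

variable {m : ℕ} {ι κ : Type*}

theorem cornerKernelMatrix_posDef {a : ℝ} (ha : a ^ 2 < 1) : (cornerKernelMatrix m a).PosDef := by
  refine posDef_diagonal_add_vecMulVec_self (i₀ := 0) le_rfl (fun i hi => ?_) (by simp)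
  obtain ⟨j, rfl⟩ := Fin.exists_succ_eq.mpr hi
  simpa using ha

theorem cornerKernelMatrix_inv_succ_succ {a : ℝ} (ha : a ^ 2 < 1) (j : Fin m) :
    (cornerKernelMatrix m a)⁻¹ j.succ j.succ = (1 - a ^ 2)⁻¹ := by
  set K := cornerKernelMatrix m a
  set y : Fin (m + 1) → ℝ := (1 - a ^ 2)⁻¹ • (Pi.single j.succ 1 - a • Pi.single 0 1)
  have hdiag : diagonal (Fin.cons 0 fun _ => 1 - a ^ 2) *ᵥ y = Pi.single j.succ 1 := by
    have : 1 - a ^ 2 ≠ 0 := by linarith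
    ext i
    refine Fin.cases ?_ (fun i => ?_) i <;> simp [mulVec_diagonal, y, Pi.single_apply, this]
  have hortho : (Fin.cons 1 fun _ => a : Fin (m + 1) → ℝ) ⬝ᵥ y = 0 := by
    simp [y, dotProduct_sub]
  have hy : K *ᵥ y = Pi.single j.succ 1 := by
    simp [K, cornerKernelMatrix, add_mulVec, vecMulVec_mulVec, hdiag, hortho]
  have hK : IsUnit K.det := (isUnit_iff_isUnit_det K).mp (cornerKernelMatrix_posDef ha).isUnit
  have hinv : K⁻¹ *ᵥ Pi.single j.succ 1 = y := by
    rw [← hy, mulVec_mulVec, nonsing_inv_mul K hK, one_mulVec]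
  calc K⁻¹ j.succ j.succ = (K⁻¹ *ᵥ Pi.single j.succ 1) j.succ := by simp
    _ = (1 - a ^ 2)⁻¹ := by simp [hinv, y]

theorem exp_neg_half_mul_sq_sq (t : ℝ) : exp (-(1 / 2) * t ^ 2) ^ 2 = exp (-t ^ 2) := by
  rw [← exp_nat_mul]; ring_nf

theorem exp_neg_half_mul_sq_sq_lt_one {t : ℝ} (ht : t ≠ 0) : exp (-(1 / 2) * t ^ 2) ^ 2 < 1 := by
  rw [exp_neg_half_mul_sq_sq, exp_lt_one_iff, neg_lt_zero]
  positivity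

theorem one_sub_le_mul_exp_neg_div_one_sub_exp_neg {u : ℝ} (hu : 0 < u) :
    1 - u ≤ u * exp (-u) / (1 - exp (-u)) := by
  have hexp : 1 - u ≤ exp (-u) := by linarith [add_one_le_exp (-u)]
  have hpos : 0 < 1 - exp (-u) := by linarith [exp_lt_one_iff.mpr (neg_lt_zero.mpr hu)]
  rw [le_div_iff₀ hpos]
  nlinarith

section InnerProductSpace

variable {E : Type*} [NormedAddCommGroup E] [InnerProductSpace ℝ E]

def rbfKernelMatrix (Z : ι → E) : Matrix ι ι ℝ :=
  of fun j l => exp (-(1 / 2) * ‖Z j - Z l‖ ^ 2)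

def cornerDesign (t : ℝ) (v : Fin m → E) : Fin (m + 1) → E := Fin.cons 0 (t • v)

variable {v : Fin m → E}

theorem inner_cornerDesign (hv : Orthonormal ℝ v) (t : ℝ) (j l : Fin (m + 1)) :
    inner ℝ (cornerDesign t v j) (cornerDesign t v l) =
      diagonal (Fin.cons 0 fun _ => t ^ 2) j l := by
  refine Fin.cases ?_ (fun j => ?_) j <;> refine Fin.cases ?_ (fun l => ?_) l <;>
    simp [cornerDesign, inner_smul_left, inner_smul_right, orthonormal_iff_ite.mp hv,
      diagonal_apply, sq]

theorem norm_cornerDesign_sq (hv : Orthonormal ℝ v) (t : ℝ) (j : Fin (m + 1)) :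
    ‖cornerDesign t v j‖ ^ 2 = (Fin.cons 0 fun _ => t ^ 2 : Fin (m + 1) → ℝ) j := by
  rw [← real_inner_self_eq_norm_sq, inner_cornerDesign hv, diagonal_apply_eq]

theorem rbfKernelMatrix_cornerDesign (hv : Orthonormal ℝ v) (t : ℝ) :
    rbfKernelMatrix (cornerDesign t v) = cornerKernelMatrix m (exp (-(1 / 2) * t ^ 2)) := by
  ext j l
  simp only [rbfKernelMatrix, of_apply, norm_sub_sq_real, inner_cornerDesign hv,
    norm_cornerDesign_sq hv]
  refine Fin.cases ?_ (fun j => ?_) j <;> refine Fin.cases ?_ (fun l => ?_) l <;>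
    simp [cornerKernelMatrix, diagonal_apply, vecMulVec_apply]
  split_ifs
  · ring_nf; simp
  · rw [← exp_add]; ring_nf

theorem rbfKernelMatrix_cornerDesign_posDef (hv : Orthonormal ℝ v) {t : ℝ} (ht : t ≠ 0) :
    (rbfKernelMatrix (cornerDesign t v)).PosDef := by
  rw [rbfKernelMatrix_cornerDesign hv]
  exact cornerKernelMatrix_posDef (exp_neg_half_mul_sq_sq_lt_one ht)

end InnerProductSpace

section EuclideanSpace

variable [Fintype κ]

def rbfGradCrossCov (Z : ι → EuclideanSpace ℝ κ) : Matrix κ ι ℝ :=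
  of fun i j => Z j i * exp (-(1 / 2) * ‖Z j‖ ^ 2)

theorem rbfGradCrossCov_transpose_mul_self (Z : ι → EuclideanSpace ℝ κ) :
    (rbfGradCrossCov Z)ᵀ * rbfGradCrossCov Z =
      of fun j l => exp (-(1 / 2) * ‖Z j‖ ^ 2) * exp (-(1 / 2) * ‖Z l‖ ^ 2) *
        inner ℝ (Z j) (Z l) := by
  ext j l
  simp only [mul_apply, transpose_apply, rbfGradCrossCov, of_apply, PiLp.inner_apply,
    Finset.mul_sum]
  exact Finset.sum_congr rfl fun i _ => by simp; ring

variable {v : Fin m → EuclideanSpace ℝ κ}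

theorem rbfGradCrossCov_cornerDesign_transpose_mul_self (hv : Orthonormal ℝ v) (t : ℝ) :
    (rbfGradCrossCov (cornerDesign t v))ᵀ * rbfGradCrossCov (cornerDesign t v) =
      diagonal (Fin.cons 0 fun _ => t ^ 2 * exp (-t ^ 2)) := by
  ext j l
  rw [rbfGradCrossCov_transpose_mul_self, of_apply, inner_cornerDesign hv]
  rcases eq_or_ne j l with rfl | hjl
  · refine Fin.cases ?_ (fun j => ?_) j
    · simp
    · simp [norm_cornerDesign_sq hv, ← exp_neg_half_mul_sq_sq]; ring
  · simp [diagonal_apply_ne _ hjl]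

theorem trace_rbfGradCrossCov_mul_inv_mul_transpose_cornerDesign (hv : Orthonormal ℝ v)
    {t : ℝ} (ht : t ≠ 0) :
    trace (rbfGradCrossCov (cornerDesign t v) * (rbfKernelMatrix (cornerDesign t v))⁻¹ *
      (rbfGradCrossCov (cornerDesign t v))ᵀ) =
        m * (t ^ 2 * exp (-t ^ 2) / (1 - exp (-t ^ 2))) := by
  rw [trace_mul_comm, ← Matrix.mul_assoc, rbfGradCrossCov_cornerDesign_transpose_mul_self hv,
    rbfKernelMatrix_cornerDesign hv]
  simp only [trace, diag_apply, diagonal_mul, Fin.sum_univ_succ, Fin.cons_zero, Fin.cons_succ,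
    zero_mul, zero_add, cornerKernelMatrix_inv_succ_succ (exp_neg_half_mul_sq_sq_lt_one ht),
    exp_neg_half_mul_sq_sq, Finset.sum_const, Finset.card_univ, Fintype.card_fin, nsmul_eq_mul]
  ring

end EuclideanSpace

end

theorem rbf_noiseless_error_function_bound_general (d b : ℕ)
    (hb2 : 2 ≤ b) (hbd : b ≤ d + 1) (ε : ℝ) (hε : 0 < ε) :
    ∃ Z : Fin b → EuclideanSpace ℝ (Fin d),
      ∀ (K : Matrix (Fin b) (Fin b) ℝ) (G : Matrix (Fin d) (Fin b) ℝ),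
        K = Matrix.of (fun j l => Real.exp (-(1 / 2) * ‖Z j - Z l‖ ^ 2)) →
        G = Matrix.of (fun i j => Z j i * Real.exp (-(1 / 2) * ‖Z j‖ ^ 2)) →
        IsUnit K.det ∧
          (d : ℝ) - Matrix.trace (G * K⁻¹ * Gᵀ) ≤ (1 + (d : ℝ) - (b : ℝ)) + ε := by
  obtain ⟨m, rfl⟩ : ∃ m, b = m + 1 := ⟨b - 1, by omega⟩
  have hmd : m ≤ d := by omega
  set u : ℝ := ε / (m + 1)
  have hu : 0 < u := by positivity
  have hmu : m * u ≤ ε := by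
    have : u * (m + 1) = ε := div_mul_cancel₀ ε (by positivity)
    linarith
  have ht : √u ≠ 0 := (sqrt_pos.mpr hu).ne'
  set v : Fin m → EuclideanSpace ℝ (Fin d) := fun j => EuclideanSpace.single (Fin.castLE hmd j) 1
  have hv : Orthonormal ℝ v := EuclideanSpace.orthonormal_single.comp _ (Fin.castLE_injective hmd)
  refine ⟨cornerDesign √u v, fun K G hK hG => ⟨?_, ?_⟩⟩
  · rw [← isUnit_iff_isUnit_det, hK]
    exact (rbfKernelMatrix_cornerDesign_posDef hv ht).isUnit
  · rw [show K = rbfKernelMatrix (cornerDesign √u v) from hK,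
      show G = rbfGradCrossCov (cornerDesign √u v) from hG,
      trace_rbfGradCrossCov_mul_inv_mul_transpose_cornerDesign hv ht, sq_sqrt hu.le]
    have := mul_le_mul_of_nonneg_left (one_sub_le_mul_exp_neg_div_one_sub_exp_neg hu)
      m.cast_nonneg
    push_cast
    linarith

/-- For the RBF kernel with noiseless observations and `2 ≤ b ≤ d + 1`, for every `ε > 0`
there is a design of `b` points whose posterior gradient covariance at the origin has trace
at most `(1 + d - b) + ε`. -/
theorem rbf_noiseless_error_function_bound (d b : ℕ) (hd : 1 ≤ d)
    (hb2 : 2 ≤ b) (hbd : b ≤ d + 1) (ε : ℝ) (hε : 0 < ε) :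
    ∃ Z : Fin b → EuclideanSpace ℝ (Fin d),
      ∀ (K : Matrix (Fin b) (Fin b) ℝ) (G : Matrix (Fin d) (Fin b) ℝ),
        K = Matrix.of (fun j l => Real.exp (-(1 / 2) * ‖Z j - Z l‖ ^ 2)) →
        G = Matrix.of (fun i j => Z j i * Real.exp (-(1 / 2) * ‖Z j‖ ^ 2)) →
        IsUnit K.det ∧
          (d : ℝ) - Matrix.trace (G * K⁻¹ * Gᵀ) ≤ (1 + (d : ℝ) - (b : ℝ)) + ε :=
  rbf_noiseless_error_function_bound_general d b hb2 hbd ε hε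
end
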